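/- With ℓ(λ) and m(λ) as below, the Lyapunov Hamiltonian flow satisfies the vector Lax equation {H₁, ℓ(λ)}₁ = m(λ) × ℓ(λ) componentwise, as an identity of functions of (p,M) for each value of λ. -/

import Mathlib

open scoped BigOperators

abbrev V3 := Fin 3 → ℝ
abbrev Ph := V3 × V3

noncomputable def eps (i j k : Fin 3) : ℝ :=
  (((j : ℤ) - (i : ℤ)) * ((k : ℤ) - (j : ℤ)) * ((k : ℤ) - (i : ℤ)) : ℤ) / 2

def dot (u v : V3) : ℝ := ∑ i, u i * v i

def cross (u v : V3) : V3 :=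
  ![u 1 * v 2 - u 2 * v 1, u 2 * v 0 - u 0 * v 2, u 0 * v 1 - u 1 * v 0]

/-- derivative in the direction of the i-th coordinate of the first factor -/
noncomputable def Dp (i : Fin 3) (F : Ph → ℝ) (z : Ph) : ℝ :=
  fderiv ℝ F z (Pi.single i 1, 0)

/-- derivative in the direction of the i-th coordinate of the second factor -/
noncomputable def DM (i : Fin 3) (F : Ph → ℝ) (z : Ph) : ℝ :=
  fderiv ℝ F z (0, Pi.single i 1)

/-- e(3) Lie–Poisson bracket on functions of z = (p, M):
{M_i,M_j} = ε_{ijk} M_k, {M_i,p_j} = ε_{ijk} p_k, {p_i,p_j} = 0. -/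
noncomputable def pb1 (F G : Ph → ℝ) (z : Ph) : ℝ :=
  ∑ i, ∑ j, ∑ k, eps i j k *
    ( z.2 k * DM i F z * DM j G z
    + z.1 k * (DM i F z * Dp j G z + Dp i F z * DM j G z) )
noncomputable def HL (a : Fin 3 → ℝ) (z : Ph) : ℝ :=
  ( dot z.2 z.2 - 2 * dot z.2 (fun i => a i * z.1 i)
  + dot z.1 (fun i => (a (i+1) - a (i+2))^2 * z.1 i) ) / 4

/-- H₁ = H_L − (⟨p,M⟩/2)tr A + |p|² tr A^∨. -/
noncomputable def H1 (a : Fin 3 → ℝ) (z : Ph) : ℝ :=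
  HL a z - (dot z.1 z.2 / 2) * (a 0 + a 1 + a 2)
    + dot z.1 z.1 * (a 1 * a 2 + a 2 * a 0 + a 0 * a 1)

/-- K\u00f6tter vector ℓ(λ) = W(½(M − Bp) + λp), W = diag(w₁,w₂,w₃),
B = diag(a₂+a₃,a₃+a₁,a₁+a₂). -/
noncomputable def lvec (a w : Fin 3 → ℝ) (lam : ℝ) (z : Ph) : V3 := fun i =>
  w i * ((1/2) * (z.2 i - (a (i+1) + a (i+2)) * z.1 i) + lam * z.1 i)

/-- m(λ) = W^∨ p, W^∨ = diag(w₂w₃, w₃w₁, w₁w₂). -/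
noncomputable def mvec (w : Fin 3 → ℝ) (z : Ph) : V3 := fun i =>
  w (i+1) * w (i+2) * z.1 i

/-! ℓ(λ)ᵢ is a linear function of (pᵢ, Mᵢ) alone, so in the bracket {H₁, ℓᵢ}₁ only the two
structure constants ε_{j i k} with {j, k} = {i+1, i+2} survive, and H₁ is a quadratic form
coupling pⱼ only with Mⱼ, so its gradient is explicit. The resulting polynomial identity holds
once the w_{i+1}², w_{i+2}² produced by m(λ) × ℓ(λ) are replaced by λ − a_{i+1}, λ − a_{i+2};
the tr A and tr A^∨ terms of H₁ come with the Casimirs ⟨p, M⟩, |p|² and cancel identically. -/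

lemma hasFDerivAt_fst_apply (i : Fin 3) (z : Ph) :
    HasFDerivAt (fun z : Ph => z.1 i)
      ((ContinuousLinearMap.proj i).comp (ContinuousLinearMap.fst ℝ V3 V3)) z :=
  ((ContinuousLinearMap.proj i).comp (ContinuousLinearMap.fst ℝ V3 V3)).hasFDerivAt

lemma hasFDerivAt_snd_apply (i : Fin 3) (z : Ph) :
    HasFDerivAt (fun z : Ph => z.2 i)
      ((ContinuousLinearMap.proj i).comp (ContinuousLinearMap.snd ℝ V3 V3)) z :=
  ((ContinuousLinearMap.proj i).comp (ContinuousLinearMap.snd ℝ V3 V3)).hasFDerivAt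

noncomputable def diagQuad (α β γ : Fin 3 → ℝ) (z : Ph) : ℝ :=
  ∑ i, (α i * z.2 i ^ 2 + β i * z.1 i * z.2 i + γ i * z.1 i ^ 2)

lemma fderiv_diagQuad_apply (α β γ : Fin 3 → ℝ) (z v : Ph) :
    fderiv ℝ (diagQuad α β γ) z v =
      ∑ i, ((2 * α i * z.2 i + β i * z.1 i) * v.2 i + (β i * z.2 i + 2 * γ i * z.1 i) * v.1 i) := by
  have h := HasFDerivAt.sum (u := Finset.univ) fun i _ =>
    ((((hasFDerivAt_snd_apply i z).pow 2).const_mul (α i)).add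
      (((hasFDerivAt_fst_apply i z).mul (hasFDerivAt_snd_apply i z)).const_mul (β i))).add
      (((hasFDerivAt_fst_apply i z).pow 2).const_mul (γ i))
  rw [(h.congr_of_eventuallyEq (.of_forall fun y => by simp [diagQuad, mul_assoc])).fderiv]
  simp only [FunLike.coe_sum, Finset.sum_apply]
  refine Finset.sum_congr rfl fun i _ => ?_
  simp only [Nat.add_one_sub_one, pow_one, nsmul_eq_mul, Nat.cast_ofNat, smul_add, add_apply,
    smul_apply, ContinuousLinearMap.comp_apply, ContinuousLinearMap.coe_snd',
    ContinuousLinearMap.proj_apply, smul_eq_mul, ContinuousLinearMap.coe_fst']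
  ring

lemma DM_diagQuad (α β γ : Fin 3 → ℝ) (z : Ph) (k : Fin 3) :
    DM k (diagQuad α β γ) z = 2 * α k * z.2 k + β k * z.1 k := by
  simp [DM, fderiv_diagQuad_apply, Pi.single_apply]

lemma Dp_diagQuad (α β γ : Fin 3 → ℝ) (z : Ph) (k : Fin 3) :
    Dp k (diagQuad α β γ) z = β k * z.2 k + 2 * γ k * z.1 k := by
  simp [Dp, fderiv_diagQuad_apply, Pi.single_apply]

lemma fderiv_coord_linear_apply (i : Fin 3) (u v : ℝ) (z x : Ph) :
    fderiv ℝ (fun z : Ph => u * z.2 i + v * z.1 i) z x = u * x.2 i + v * x.1 i := by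
  have h : HasFDerivAt (fun z : Ph => u * z.2 i + v * z.1 i) _ z :=
    ((hasFDerivAt_snd_apply i z).const_mul u).add ((hasFDerivAt_fst_apply i z).const_mul v)
  rw [h.fderiv]
  simp

lemma DM_coord_linear (i k : Fin 3) (u v : ℝ) (z : Ph) :
    DM k (fun z : Ph => u * z.2 i + v * z.1 i) z = if k = i then u else 0 := by
  simp [DM, fderiv_coord_linear_apply, Pi.single_apply, eq_comm]

lemma Dp_coord_linear (i k : Fin 3) (u v : ℝ) (z : Ph) :
    Dp k (fun z : Ph => u * z.2 i + v * z.1 i) z = if k = i then v else 0 := by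
  simp [Dp, fderiv_coord_linear_apply, Pi.single_apply, eq_comm]

lemma pb1_eq_of_grad_single (F G : Ph → ℝ) (z : Ph) (i : Fin 3) (u v : ℝ)
    (hM : ∀ k, DM k G z = if k = i then u else 0) (hp : ∀ k, Dp k G z = if k = i then v else 0) :
    pb1 F G z = ∑ j, ∑ k, eps j i k *
      (z.2 k * DM j F z * u + z.1 k * (DM j F z * v + Dp j F z * u)) := by
  simp only [pb1, hM, hp]
  refine Finset.sum_congr rfl fun j _ => ?_
  rw [Finset.sum_comm]
  refine Finset.sum_congr rfl fun k _ => ?_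
  rw [Fintype.sum_eq_single i fun x hx => by simp [hx]]
  simp

lemma sum_eps_middle (f : Fin 3 → Fin 3 → ℝ) (i : Fin 3) :
    ∑ j, ∑ k, eps j i k * f j k = f (i + 2) (i + 1) - f (i + 1) (i + 2) := by
  fin_cases i <;> simp [Fin.sum_univ_three, eps] <;> ring

lemma cross_apply_eq_cyclic (u v : V3) (i : Fin 3) :
    cross u v i = u (i + 1) * v (i + 2) - u (i + 2) * v (i + 1) := by
  fin_cases i <;> rfl

lemma lvec_apply_eq_coord_linear (a w : Fin 3 → ℝ) (lam : ℝ) (i : Fin 3) :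
    (fun z => lvec a w lam z i) = fun z : Ph =>
      w i / 2 * z.2 i + w i * (lam - (a (i + 1) + a (i + 2)) / 2) * z.1 i := by
  ext z; simp only [lvec]; ring

lemma H1_eq_diagQuad (a : Fin 3 → ℝ) :
    H1 a = diagQuad (fun _ => 1 / 4) (fun k => -(a k + (a 0 + a 1 + a 2)) / 2)
      (fun k => (a (k + 1) - a (k + 2)) ^ 2 / 4 + (a 1 * a 2 + a 2 * a 0 + a 0 * a 1)) := by
  ext z
  simp only [H1, HL, diagQuad, dot, Fin.sum_univ_three, Fin.isValue, Fin.reduceAdd]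
  ring

/-- The vector Lax equation {H₁, ℓ(λ)}₁ = m(λ) × ℓ(λ), componentwise, as an
identity in the symbols wᵢ subject to wᵢ² = λ − aᵢ. -/
theorem vector_lax_equation (a w : Fin 3 → ℝ) (lam : ℝ)
    (hw : ∀ i, w i ^ 2 = lam - a i) (z : Ph) (i : Fin 3) :
    pb1 (H1 a) (fun z => lvec a w lam z i) z
      = cross (mvec w z) (lvec a w lam z) i := by
  rw [pb1_eq_of_grad_single _ _ z i _ _
      (fun k => by rw [lvec_apply_eq_coord_linear, DM_coord_linear])
      (fun k => by rw [lvec_apply_eq_coord_linear, Dp_coord_linear]),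
    sum_eps_middle, cross_apply_eq_cyclic, H1_eq_diagQuad]
  obtain ⟨h21, h22, h11, h12⟩ :
      i + 2 + 1 = i ∧ i + 2 + 2 = i + 1 ∧ i + 1 + 1 = i + 2 ∧ i + 1 + 2 = i := by
    fin_cases i <;> decide
  simp only [DM_diagQuad, Dp_diagQuad, mvec, lvec, h21, h22, h11, h12]
  linear_combination
    (w i * z.1 (i + 2) * ((1 / 2) * (z.2 (i + 1) - (a (i + 2) + a i) * z.1 (i + 1))
      + lam * z.1 (i + 1))) * hw (i + 1)
    - (w i * z.1 (i + 1) * ((1 / 2) * (z.2 (i + 2) - (a i + a (i + 1)) * z.1 (i + 2))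
      + lam * z.1 (i + 2))) * hw (i + 2)
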